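/- In the mixed case there exists a constant C > 0, depending only on δ, β_Ω, such that for all h ∈ (0,1/4) and all (r,z) with 0 < r < δ and 0 < z < h + γ_s(r): |Ψ(r,z)| ≤ C, |∂_zΨ(r,z)| ≤ C/(h+γ_s(r)), |∂_rΨ(r,z)| ≤ C·r/(h+γ_s(r)), |∂_{rr}Ψ(r,z)| ≤ C/(h+γ_s(r)), |∂_{zz}Ψ(r,z)| ≤ C/(h+γ_s(r))², |∂_{rz}Ψ(r,z)| ≤ C·r/(h+γ_s(r))², |∂_{zzz}Ψ(r,z)| ≤ C/(h+γ_s(r))³, |∂_{rrz}Ψ(r,z)| ≤ C/(h+γ_s(r))², and |∂_{rzz}Ψ(r,z)| ≤ C·r/(h+γ_s(r))³. -/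

import Mathlib

open Real MeasureTheory intervalIntegral

noncomputable section

/-- `γ_s(r) = 1 - √(1 - r²)`. -/
def gam (r : ℝ) : ℝ := 1 - Real.sqrt (1 - r ^ 2)

/-- `α_P(r) = (h + γ_s(r)) / β_Ω`. -/
def aP (βΩ h r : ℝ) : ℝ := (h + gam r) / βΩ

/-- The cubic `Φ(r,t) = P₁(r) t + P₂(r) t² + P₃(r) t³` of the mixed case. -/
def Phi (βΩ h r t : ℝ) : ℝ :=
  6 / (4 + aP βΩ h r) * t + 3 * aP βΩ h r / (4 + aP βΩ h r) * t ^ 2 +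
  -(2 * (1 + aP βΩ h r)) / (4 + aP βΩ h r) * t ^ 3

/-- `Ψ(r,z) = Φ(r, z / (h + γ_s(r)))`. -/
def Psi (βΩ h r z : ℝ) : ℝ := Phi βΩ h r (z / (h + gam r))

/-- Partial derivative in the first (`r`) variable. -/
def dR (f : ℝ → ℝ → ℝ) : ℝ → ℝ → ℝ := fun r z => deriv (fun r' => f r' z) r

/-- Partial derivative in the second (`z`) variable. -/
def dZ (f : ℝ → ℝ → ℝ) : ℝ → ℝ → ℝ := fun r z => deriv (fun z' => f r z') z

/-!
In the coordinates `u = 1 / (4 + α_P(r))` and `t = z / (h + γ_s(r))` the function `Ψ` is the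
polynomial `6 u t + (3 - 12 u) t² + (6 u - 2) t³`, and on `0 ≤ z ≤ h + γ_s(r)` the point `(u, t)`
stays in the box `[0, 1/4] × [0, 1]`, where every polynomial is bounded. A `z`-derivative acts as
`(h + γ_s)⁻¹ ∂_t`; since `u` and `t` depend on `r` only through the scale `h + γ_s`, an
`r`-derivative acts as `γ_s' / (h + γ_s)` times an Euler-type operator in `(u, t)`. So each
derivative of `Ψ` is a combination of bounded polynomials in `(u, t)` with coefficients built from
`(h + γ_s)⁻¹`, `γ_s' / (h + γ_s)` and `γ_s''`, and the bounds follow from `|γ_s'| ≤ 2r`,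
`γ_s'' ≤ 8` and `γ_s'² ≤ 8 γ_s ≤ 8 (h + γ_s)`.
-/

open MvPolynomial Topology

lemma abs_div_le_div_of_abs_le {x y d : ℝ} (hd : 0 < d) (h : |x| ≤ y) : |x / d| ≤ y / d := by
  rw [abs_div, abs_of_pos hd]
  gcongr

lemma MvPolynomial.hasDerivAt_eval_comp {σ : Type*} [Fintype σ] (P : MvPolynomial σ ℝ)
    {x : ℝ → σ → ℝ} {x' : σ → ℝ} {s : ℝ} (hx : ∀ i, HasDerivAt (fun s => x s i) (x' i) s) :
    HasDerivAt (fun s => eval (x s) P) (∑ i, eval (x s) (pderiv i P) * x' i) s := by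
  classical
  induction P using MvPolynomial.induction_on with
  | C a => simpa [pderiv_C] using hasDerivAt_const s a
  | add p q hp hq =>
    simp only [map_add, add_mul, Finset.sum_add_distrib]
    exact hp.add hq
  | mul_X p n hp =>
    simp only [map_mul, eval_X]
    refine (hp.mul (hx n)).congr_deriv ?_
    simp only [Derivation.leibniz, pderiv_X, smul_eq_mul, map_add, map_mul, eval_X, add_mul,
      Finset.sum_add_distrib, Pi.single_apply, mul_ite, mul_one, mul_zero, apply_ite (eval (x s)),
      map_zero, ite_mul, zero_mul, Finset.sum_ite_eq, Finset.mem_univ, if_true, Finset.sum_mul]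
    rw [add_comm]
    exact congrArg₂ _ rfl (Finset.sum_congr rfl fun _ _ => by ring)

lemma MvPolynomial.exists_abs_eval_le_of_isCompact {σ : Type*} {K : Set (σ → ℝ)} (hK : IsCompact K)
    (S : Finset (MvPolynomial σ ℝ)) : ∃ M, 0 < M ∧ ∀ P ∈ S, ∀ x ∈ K, |eval x P| ≤ M := by
  obtain ⟨M, hM⟩ := hK.exists_bound_of_continuousOn (f := fun x => ∑ P ∈ S, |eval x P|)
    (continuous_finsetSum _ fun P _ => (continuous_eval P).abs).continuousOn
  refine ⟨max M 1, by positivity, fun P hP x hx => ?_⟩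
  calc |eval x P| ≤ ∑ Q ∈ S, |eval x Q| :=
        Finset.single_le_sum (f := fun Q => |eval x Q|) (fun Q _ => abs_nonneg _) hP
    _ ≤ ‖∑ Q ∈ S, |eval x Q|‖ := Real.le_norm_self _
    _ ≤ M := hM x hx
    _ ≤ max M 1 := le_max_left _ _

section Gam

variable {r : ℝ}

def gam' (r : ℝ) : ℝ := r / √(1 - r ^ 2)

def gam'' (r : ℝ) : ℝ := (√(1 - r ^ 2) ^ 3)⁻¹

lemma gam_nonneg (r : ℝ) : 0 ≤ gam r := by
  have : √(1 - r ^ 2) ≤ 1 := Real.sqrt_le_one.2 (by nlinarith)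
  unfold gam; linarith

lemma sq_le_two_mul_gam (hr : r ^ 2 ≤ 1) : r ^ 2 ≤ 2 * gam r := by
  have : √(1 - r ^ 2) ≤ 1 - r ^ 2 / 2 :=
    Real.sqrt_le_iff.2 ⟨by linarith, by nlinarith⟩
  unfold gam; linarith

lemma hasDerivAt_sqrt_one_sub_sq (hr : r ^ 2 < 1) :
    HasDerivAt (fun x => √(1 - x ^ 2)) (-gam' r) r := by
  have hs : 0 < √(1 - r ^ 2) := Real.sqrt_pos.2 (by linarith)
  convert ((hasDerivAt_pow 2 r).const_sub 1).sqrt (by linarith) using 1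
  unfold gam'
  field_simp
  ring

lemma hasDerivAt_gam (hr : r ^ 2 < 1) : HasDerivAt gam (gam' r) r := by
  have := (hasDerivAt_sqrt_one_sub_sq hr).const_sub 1
  rwa [neg_neg] at this

lemma hasDerivAt_gam' (hr : r ^ 2 < 1) : HasDerivAt gam' (gam'' r) r := by
  have hs : 0 < √(1 - r ^ 2) := Real.sqrt_pos.2 (by linarith)
  have hsq : √(1 - r ^ 2) ^ 2 = 1 - r ^ 2 := Real.sq_sqrt (by linarith)
  refine ((hasDerivAt_id' r).div (hasDerivAt_sqrt_one_sub_sq hr) hs.ne').congr_deriv ?_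
  unfold gam' gam''
  field_simp
  linear_combination hsq

lemma half_le_sqrt_one_sub_sq (hr : r ^ 2 ≤ 3 / 4) : 1 / 2 ≤ √(1 - r ^ 2) :=
  Real.le_sqrt_of_sq_le (by linarith)

lemma abs_gam'_le (hr : r ^ 2 ≤ 3 / 4) : |gam' r| ≤ 2 * |r| := by
  have hs := half_le_sqrt_one_sub_sq hr
  have hs' : 0 < √(1 - r ^ 2) := by linarith
  rw [gam', abs_div, abs_of_pos hs', div_le_iff₀ hs']
  nlinarith [abs_nonneg r]

lemma gam'_sq_le (hr : r ^ 2 ≤ 3 / 4) : gam' r ^ 2 ≤ 8 * gam r := by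
  have h := abs_gam'_le hr
  have := sq_le_two_mul_gam (r := r) (by linarith)
  nlinarith [sq_abs (gam' r), sq_abs r, abs_nonneg (gam' r)]

lemma gam''_le (hr : r ^ 2 ≤ 3 / 4) : gam'' r ≤ 8 := by
  have hs := half_le_sqrt_one_sub_sq hr
  rw [gam'', inv_le_comm₀ (by positivity) (by norm_num)]
  calc (8 : ℝ)⁻¹ = (1 / 2) ^ 3 := by norm_num
    _ ≤ _ := by gcongr

lemma gam''_nonneg (r : ℝ) : 0 ≤ gam'' r := by unfold gam''; positivity

end Gam

section GapLogDeriv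

variable {h r : ℝ}

def gapLogDeriv (h r : ℝ) : ℝ := gam' r / (h + gam r)

lemma hasDerivAt_gapLogDeriv (hh : 0 < h) (hr : r ^ 2 < 1) :
    HasDerivAt (gapLogDeriv h) (gam'' r / (h + gam r) - gapLogDeriv h r ^ 2) r := by
  have hg : 0 < h + gam r := by linarith [gam_nonneg r]
  refine ((hasDerivAt_gam' hr).div ((hasDerivAt_gam hr).const_add h) hg.ne').congr_deriv ?_
  unfold gapLogDeriv
  field_simp

lemma abs_gapLogDeriv_le (hh : 0 < h) (hr : r ^ 2 ≤ 3 / 4) :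
    |gapLogDeriv h r| ≤ 2 * |r| / (h + gam r) := by
  have hg : 0 < h + gam r := by linarith [gam_nonneg r]
  rw [gapLogDeriv, abs_div, abs_of_pos hg]
  gcongr
  exact abs_gam'_le hr

lemma gapLogDeriv_sq_le (hh : 0 < h) (hr : r ^ 2 ≤ 3 / 4) :
    gapLogDeriv h r ^ 2 ≤ 8 / (h + gam r) := by
  have hg : 0 < h + gam r := by linarith [gam_nonneg r]
  rw [gapLogDeriv, div_pow, div_le_div_iff₀ (by positivity) hg]
  nlinarith [gam'_sq_le hr]

lemma abs_deriv_gapLogDeriv_le (hh : 0 < h) (hr : r ^ 2 ≤ 3 / 4) :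
    |gam'' r / (h + gam r) - gapLogDeriv h r ^ 2| ≤ 16 / (h + gam r) := by
  have hg : 0 < h + gam r := by linarith [gam_nonneg r]
  have h₁ : gam'' r / (h + gam r) ≤ 8 / (h + gam r) := by gcongr; exact gam''_le hr
  have h₂ := gapLogDeriv_sq_le hh hr
  have h₃ : 0 ≤ gam'' r / (h + gam r) := div_nonneg (gam''_nonneg r) hg.le
  have h₄ : 16 / (h + gam r) = 2 * (8 / (h + gam r)) := by ring
  rw [abs_le]
  constructor <;> linarith [sq_nonneg (gapLogDeriv h r)]

lemma abs_gapLogDeriv_mul_le {e M : ℝ} (hh : 0 < h) (hr0 : 0 ≤ r) (hr : r ^ 2 ≤ 3 / 4)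
    (he : |e| ≤ M) : |gapLogDeriv h r * e| ≤ 2 * M * r / (h + gam r) := by
  have hc := abs_gapLogDeriv_le hh hr
  rw [abs_of_nonneg hr0] at hc
  calc |gapLogDeriv h r * e| = |gapLogDeriv h r| * |e| := abs_mul _ _
    _ ≤ 2 * r / (h + gam r) * M := mul_le_mul hc he (abs_nonneg _) ((abs_nonneg _).trans hc)
    _ = 2 * M * r / (h + gam r) := by ring

lemma abs_deriv_gapLogDeriv_mul_add_le {e₁ e₂ M : ℝ} (hh : 0 < h) (hr : r ^ 2 ≤ 3 / 4)
    (he₁ : |e₁| ≤ M) (he₂ : |e₂| ≤ M) :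
    |(gam'' r / (h + gam r) - gapLogDeriv h r ^ 2) * e₁ + gapLogDeriv h r ^ 2 * e₂| ≤
      24 * M / (h + gam r) := by
  have hc' := abs_deriv_gapLogDeriv_le hh hr
  have hc2 := gapLogDeriv_sq_le hh hr
  calc _ ≤ |(gam'' r / (h + gam r) - gapLogDeriv h r ^ 2) * e₁| + |gapLogDeriv h r ^ 2 * e₂| :=
        abs_add_le _ _
    _ = |gam'' r / (h + gam r) - gapLogDeriv h r ^ 2| * |e₁| + gapLogDeriv h r ^ 2 * |e₂| := by
        rw [abs_mul, abs_mul, abs_of_nonneg (sq_nonneg (gapLogDeriv h r))]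
    _ ≤ 16 / (h + gam r) * M + 8 / (h + gam r) * M :=
        add_le_add (mul_le_mul hc' he₁ (abs_nonneg _) ((abs_nonneg _).trans hc'))
          (mul_le_mul hc2 he₂ (abs_nonneg _) ((sq_nonneg _).trans hc2))
    _ = 24 * M / (h + gam r) := by ring

end GapLogDeriv

section CuspPolynomial

variable {β h r z : ℝ}

def cuspEval (β h : ℝ) (P : MvPolynomial (Fin 2) ℝ) (r z : ℝ) : ℝ :=
  eval ![(4 + aP β h r)⁻¹, z / (h + gam r)] P

/-- `Φ` in `u = 1 / (4 + α_P)`: `P₁ = 6u`, `P₂ = 3 - 12u`, `P₃ = 6u - 2`. -/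
def phiPoly : MvPolynomial (Fin 2) ℝ :=
  6 * X 0 * X 1 + (3 - 12 * X 0) * X 1 ^ 2 + (6 * X 0 - 2) * X 1 ^ 3

/-- With `(u, t)` the coordinates of `cuspEval`, `∂_r u = -(γ_s' / (h + γ_s)) u (1 - 4u)` and
`∂_r t = -(γ_s' / (h + γ_s)) t`, so `∂_r` acts on `cuspEval` as `γ_s' / (h + γ_s)` times this. -/
def scaleDeriv (P : MvPolynomial (Fin 2) ℝ) : MvPolynomial (Fin 2) ℝ :=
  -(X 0 * (1 - 4 * X 0)) * pderiv 0 P - X 1 * pderiv 1 P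

lemma four_add_aP_pos (hβ : 0 < β) (hh : 0 ≤ h) (r : ℝ) : 0 < 4 + aP β h r := by
  have := gam_nonneg r
  unfold aP; positivity

lemma Psi_eq_cuspEval (hβ : 0 < β) (hh : 0 ≤ h) (r z : ℝ) :
    Psi β h r z = cuspEval β h phiPoly r z := by
  have := (four_add_aP_pos hβ hh r).ne'
  simp only [Psi, Phi, cuspEval, phiPoly, map_add, map_sub, map_mul, map_pow, map_ofNat, eval_X,
    Matrix.cons_val_zero, Matrix.cons_val_one]
  field_simp
  ring

lemma hasDerivAt_cuspEval_z (P : MvPolynomial (Fin 2) ℝ) (r z : ℝ) :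
    HasDerivAt (fun z => cuspEval β h P r z)
      (cuspEval β h (pderiv 1 P) r z / (h + gam r)) z := by
  have hx : ∀ i, HasDerivAt (fun z => ![(4 + aP β h r)⁻¹, z / (h + gam r)] i)
      (![0, 1 / (h + gam r)] i) z := by
    intro i; fin_cases i
    · exact hasDerivAt_const z _
    · exact (hasDerivAt_id' z).div_const _
  simpa [Fin.sum_univ_two, cuspEval, div_eq_mul_inv] using hasDerivAt_eval_comp P hx

lemma hasDerivAt_cuspEval_r (hβ : 0 < β) (hh : 0 < h) (hr : r ^ 2 < 1)
    (P : MvPolynomial (Fin 2) ℝ) (z : ℝ) :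
    HasDerivAt (fun r => cuspEval β h P r z)
      (gapLogDeriv h r * cuspEval β h (scaleDeriv P) r z) r := by
  have hg : 0 < h + gam r := by linarith [gam_nonneg r]
  have hα := four_add_aP_pos hβ hh.le r
  have hgr : HasDerivAt (fun r => h + gam r) (gam' r) r := (hasDerivAt_gam hr).const_add h
  have hx : ∀ i, HasDerivAt (fun r => ![(4 + aP β h r)⁻¹, z / (h + gam r)] i)
      (![-(gam' r / β) / (4 + aP β h r) ^ 2, -(z * gam' r) / (h + gam r) ^ 2] i) r := by
    intro i; fin_cases i
    · exact ((hgr.div_const β).const_add 4).inv hα.ne'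
    · refine ((hasDerivAt_const r z).div hgr hg.ne').congr_deriv ?_
      simp
  refine (hasDerivAt_eval_comp P hx).congr_deriv ?_
  simp only [Fin.sum_univ_two, cuspEval, scaleDeriv, map_sub, map_mul, map_neg, map_ofNat, eval_X,
    map_one, Matrix.cons_val_zero, Matrix.cons_val_one, aP, gapLogDeriv]
  field_simp
  ring

lemma cuspPoint_mem_Icc (hβ : 0 < β) (hh : 0 ≤ h) (hz0 : 0 ≤ z) (hz : z ≤ h + gam r) :
    ![(4 + aP β h r)⁻¹, z / (h + gam r)] ∈ Set.Icc (0 : Fin 2 → ℝ) ![1 / 4, 1] := by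
  have hα := four_add_aP_pos hβ hh r
  have hα4 : 4 ≤ 4 + aP β h r :=
    le_add_of_nonneg_right (div_nonneg (by linarith [gam_nonneg r]) hβ.le)
  refine ⟨fun i => ?_, fun i => ?_⟩ <;> fin_cases i
  · exact inv_nonneg.2 hα.le
  · exact div_nonneg hz0 (hz0.trans hz)
  · simpa using inv_anti₀ (by norm_num) hα4
  · exact div_le_one_of_le₀ hz (hz0.trans hz)

lemma exists_bound_cuspEval (S : Finset (MvPolynomial (Fin 2) ℝ)) :
    ∃ M, 0 < M ∧ ∀ P ∈ S, ∀ β h r z : ℝ, 0 < β → 0 ≤ h → 0 ≤ z → z ≤ h + gam r →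
      |cuspEval β h P r z| ≤ M := by
  obtain ⟨M, hM0, hM⟩ :=
    exists_abs_eval_le_of_isCompact (isCompact_Icc (a := 0) (b := ![1 / 4, 1])) S
  exact ⟨M, hM0, fun P hP β h r z hβ hh hz0 hz => hM P hP _ (cuspPoint_mem_Icc hβ hh hz0 hz)⟩

end CuspPolynomial

section PsiDerivatives

variable {β h r z : ℝ}

lemma dZ_eq_of_eq_cuspEval {f : ℝ → ℝ → ℝ} {a : ℝ} {k : ℕ} (Q : MvPolynomial (Fin 2) ℝ)
    (hf : ∀ z, f r z = a * cuspEval β h Q r z / (h + gam r) ^ k) (z : ℝ) :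
    dZ f r z = a * cuspEval β h (pderiv 1 Q) r z / (h + gam r) ^ (k + 1) := by
  show deriv (fun z => f r z) z = _
  simp_rw [hf]
  refine (((hasDerivAt_cuspEval_z Q r z).const_mul a).div_const _).deriv.trans ?_
  rw [pow_succ, ← div_div]
  ring

lemma dZ_Psi (hβ : 0 < β) (hh : 0 ≤ h) (r z : ℝ) :
    dZ (Psi β h) r z = cuspEval β h (pderiv 1 phiPoly) r z / (h + gam r) := by
  simpa using dZ_eq_of_eq_cuspEval (a := 1) (k := 0) phiPoly
    (fun z => by simp [Psi_eq_cuspEval hβ hh]) z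

lemma dZ_dZ_Psi (hβ : 0 < β) (hh : 0 ≤ h) (r z : ℝ) :
    dZ (dZ (Psi β h)) r z = cuspEval β h (pderiv 1 (pderiv 1 phiPoly)) r z / (h + gam r) ^ 2 := by
  simpa using dZ_eq_of_eq_cuspEval (a := 1) (k := 1) _
    (fun z => by simp [dZ_Psi hβ hh]) z

lemma dZ_dZ_dZ_Psi (hβ : 0 < β) (hh : 0 ≤ h) (r z : ℝ) :
    dZ (dZ (dZ (Psi β h))) r z =
      cuspEval β h (pderiv 1 (pderiv 1 (pderiv 1 phiPoly))) r z / (h + gam r) ^ 3 := by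
  simpa using dZ_eq_of_eq_cuspEval (a := 1) (k := 2) _
    (fun z => by simp [dZ_dZ_Psi hβ hh]) z

lemma dR_Psi (hβ : 0 < β) (hh : 0 < h) (hr : r ^ 2 < 1) (z : ℝ) :
    dR (Psi β h) r z = gapLogDeriv h r * cuspEval β h (scaleDeriv phiPoly) r z := by
  show deriv (fun r => Psi β h r z) r = _
  simp_rw [Psi_eq_cuspEval hβ hh.le]
  exact (hasDerivAt_cuspEval_r hβ hh hr phiPoly z).deriv

lemma dZ_dR_Psi (hβ : 0 < β) (hh : 0 < h) (hr : r ^ 2 < 1) (z : ℝ) :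
    dZ (dR (Psi β h)) r z =
      gapLogDeriv h r * cuspEval β h (pderiv 1 (scaleDeriv phiPoly)) r z / (h + gam r) := by
  simpa using dZ_eq_of_eq_cuspEval (k := 0) _ (fun z => by simp [dR_Psi hβ hh hr]) z

lemma dZ_dZ_dR_Psi (hβ : 0 < β) (hh : 0 < h) (hr : r ^ 2 < 1) (z : ℝ) :
    dZ (dZ (dR (Psi β h))) r z = gapLogDeriv h r *
      cuspEval β h (pderiv 1 (pderiv 1 (scaleDeriv phiPoly))) r z / (h + gam r) ^ 2 :=
  dZ_eq_of_eq_cuspEval (k := 1) _ (fun z => by rw [dZ_dR_Psi hβ hh hr, pow_one]) z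

lemma dR_dR_Psi (hβ : 0 < β) (hh : 0 < h) (hr : r ^ 2 < 1) (z : ℝ) :
    dR (dR (Psi β h)) r z =
      (gam'' r / (h + gam r) - gapLogDeriv h r ^ 2) * cuspEval β h (scaleDeriv phiPoly) r z +
        gapLogDeriv h r ^ 2 * cuspEval β h (scaleDeriv (scaleDeriv phiPoly)) r z := by
  have hU : ∀ᶠ r' in 𝓝 r, r' ^ 2 < 1 :=
    (isOpen_lt (continuous_pow 2) continuous_const).mem_nhds hr
  have hdR : (fun r' => dR (Psi β h) r' z) =ᶠ[𝓝 r]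
      fun r' => gapLogDeriv h r' * cuspEval β h (scaleDeriv phiPoly) r' z :=
    hU.mono fun r' hr' => dR_Psi hβ hh hr' z
  show deriv (fun r' => dR (Psi β h) r' z) r = _
  rw [hdR.deriv_eq]
  refine ((hasDerivAt_gapLogDeriv hh hr).mul (hasDerivAt_cuspEval_r hβ hh hr _ z)).deriv.trans ?_
  ring

lemma dZ_dR_dR_Psi (hβ : 0 < β) (hh : 0 < h) (hr : r ^ 2 < 1) (z : ℝ) :
    dZ (dR (dR (Psi β h))) r z =
      ((gam'' r / (h + gam r) - gapLogDeriv h r ^ 2) *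
          cuspEval β h (pderiv 1 (scaleDeriv phiPoly)) r z +
        gapLogDeriv h r ^ 2 * cuspEval β h (pderiv 1 (scaleDeriv (scaleDeriv phiPoly))) r z) /
        (h + gam r) := by
  show deriv (fun z => dR (dR (Psi β h)) r z) z = _
  simp_rw [dR_dR_Psi hβ hh hr]
  refine (((hasDerivAt_cuspEval_z _ r z).const_mul _).add
    ((hasDerivAt_cuspEval_z _ r z).const_mul _)).deriv.trans ?_
  ring

end PsiDerivatives

/-- Proposition B.1 (mixed case): pointwise bounds on `Ψ` and its derivatives up to
third order in the cusp region. -/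
theorem Psi_bounds_mixed (δ βΩ : ℝ) (hδ : δ ∈ Set.Ioo (0 : ℝ) (1 / 4)) (hβΩ : 0 < βΩ) :
    ∃ C : ℝ, 0 < C ∧ ∀ h ∈ Set.Ioo (0 : ℝ) (1 / 4), ∀ r z : ℝ,
      0 < r → r < δ → 0 < z → z < h + gam r →
      |Psi βΩ h r z| ≤ C ∧
      |dZ (Psi βΩ h) r z| ≤ C / (h + gam r) ∧
      |dR (Psi βΩ h) r z| ≤ C * r / (h + gam r) ∧
      |dR (dR (Psi βΩ h)) r z| ≤ C / (h + gam r) ∧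
      |dZ (dZ (Psi βΩ h)) r z| ≤ C / (h + gam r) ^ 2 ∧
      |dZ (dR (Psi βΩ h)) r z| ≤ C * r / (h + gam r) ^ 2 ∧
      |dZ (dZ (dZ (Psi βΩ h))) r z| ≤ C / (h + gam r) ^ 3 ∧
      |dZ (dR (dR (Psi βΩ h))) r z| ≤ C / (h + gam r) ^ 2 ∧
      |dZ (dZ (dR (Psi βΩ h))) r z| ≤ C * r / (h + gam r) ^ 3 := by
  classical
  obtain ⟨M, hM0, hM⟩ := exists_bound_cuspEval
    {phiPoly, pderiv 1 phiPoly, pderiv 1 (pderiv 1 phiPoly), pderiv 1 (pderiv 1 (pderiv 1 phiPoly)),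
      scaleDeriv phiPoly, pderiv 1 (scaleDeriv phiPoly), pderiv 1 (pderiv 1 (scaleDeriv phiPoly)),
      scaleDeriv (scaleDeriv phiPoly), pderiv 1 (scaleDeriv (scaleDeriv phiPoly))}
  refine ⟨24 * M, by positivity, fun h ⟨hh, _⟩ r z hr0 hrδ hz0 hzg => ?_⟩
  have hr : r ^ 2 ≤ 3 / 4 := by nlinarith [hδ.2]
  have hr1 : r ^ 2 < 1 := by linarith
  have hg : 0 < h + gam r := by linarith [gam_nonneg r]
  have hE := fun Q hQ => hM Q hQ βΩ h r z hβΩ hh.le hz0.le hzg.le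
  have hE24 := fun Q hQ => (hE Q hQ).trans (by linarith : M ≤ 24 * M)
  have hrate {e : ℝ} (he : |e| ≤ M) : |gapLogDeriv h r * e| ≤ 24 * M * r / (h + gam r) :=
    (abs_gapLogDeriv_mul_le hh hr0.le hr he).trans (by gcongr; norm_num)
  rw [Psi_eq_cuspEval hβΩ hh.le, dZ_Psi hβΩ hh.le, dR_Psi hβΩ hh hr1, dR_dR_Psi hβΩ hh hr1,
    dZ_dZ_Psi hβΩ hh.le, dZ_dR_Psi hβΩ hh hr1, dZ_dZ_dZ_Psi hβΩ hh.le, dZ_dR_dR_Psi hβΩ hh hr1,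
    dZ_dZ_dR_Psi hβΩ hh hr1]
  refine ⟨?_, ?_, ?_, ?_, ?_, ?_, ?_, ?_, ?_⟩
  · exact hE24 _ (by simp)
  · exact abs_div_le_div_of_abs_le hg (hE24 _ (by simp))
  · exact hrate (hE _ (by simp))
  · exact abs_deriv_gapLogDeriv_mul_add_le hh hr (hE _ (by simp)) (hE _ (by simp))
  · exact abs_div_le_div_of_abs_le (by positivity) (hE24 _ (by simp))
  · exact (abs_div_le_div_of_abs_le hg (hrate (hE _ (by simp)))).trans_eq (by field_simp)
  · exact abs_div_le_div_of_abs_le (by positivity) (hE24 _ (by simp))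
  · exact (abs_div_le_div_of_abs_le hg (abs_deriv_gapLogDeriv_mul_add_le hh hr
      (hE _ (by simp)) (hE _ (by simp)))).trans_eq (by field_simp)
  · exact (abs_div_le_div_of_abs_le (by positivity) (hrate (hE _ (by simp)))).trans_eq
      (by field_simp)
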